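/- arXiv:2206.05569 — 3 statements merged into one kernel-verified Lean document; each statement's English description precedes it below -/
import Mathlib

section
/- Over a field K of characteristic 0, let (x₄,y₄) ∈ K² satisfy x₄y₄(x₄+y₄-1)(x₄+y₄)(x₄-1)(y₄-1) ≠ 0, and define f(x,y) = y₄²(y₄-1)(2x₄+y₄-1)(2x³-3x²) + x₄²(x₄-1)(x₄+2y₄-1)(2y³-3y²) - 6x₄y₄(x₄-1)(y₄-1)(x²y + xy² - xy). Then each of the four points (0,0), (1,0), (0,1), (x₄,y₄) is a critical point of f. -/
open MvPolynomial

/-- For `(x₄,y₄)` avoiding the line arrangement, each of `(0,0), (1,0), (0,1), (x₄,y₄)` is a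
critical point of
`f = y₄²(y₄-1)(2x₄+y₄-1)(2x³-3x²) + x₄²(x₄-1)(x₄+2y₄-1)(2y³-3y²)
  - 6x₄y₄(x₄-1)(y₄-1)(x²y+xy²-xy)`. -/
theorem stmt4 (K : Type*) [Field K] [CharZero K] (x₄ y₄ : K)
    (hA : x₄ * y₄ * (x₄ + y₄ - 1) * (x₄ + y₄) * (x₄ - 1) * (y₄ - 1) ≠ 0)
    (f : MvPolynomial (Fin 2) K)
    (hf : f = C (y₄ ^ 2 * (y₄ - 1) * (2 * x₄ + y₄ - 1)) * (2 * X 0 ^ 3 - 3 * X 0 ^ 2) +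
      C (x₄ ^ 2 * (x₄ - 1) * (x₄ + 2 * y₄ - 1)) * (2 * X 1 ^ 3 - 3 * X 1 ^ 2) -
      C (6 * x₄ * y₄ * (x₄ - 1) * (y₄ - 1)) *
        (X 0 ^ 2 * X 1 + X 0 * X 1 ^ 2 - X 0 * X 1)) :
    ∀ p ∈ ({![0, 0], ![1, 0], ![0, 1], ![x₄, y₄]} : Set (Fin 2 → K)),
      eval p (pderiv 0 f) = 0 ∧ eval p (pderiv 1 f) = 0 := by
  subst hf
  set a := y₄ ^ 2 * (y₄ - 1) * (2 * x₄ + y₄ - 1) with ha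
  set b := x₄ ^ 2 * (x₄ - 1) * (x₄ + 2 * y₄ - 1) with hb
  set c := 6 * x₄ * y₄ * (x₄ - 1) * (y₄ - 1) with hc
  have h2 : (2 : MvPolynomial (Fin 2) K) = C 2 := (map_ofNat C 2).symm
  have h3 : (3 : MvPolynomial (Fin 2) K) = C 3 := (map_ofNat C 3).symm
  have h01 : (0 : Fin 2) ≠ 1 := by decide
  have hd0 : pderiv (0 : Fin 2) ((C a * (2 * X 0 ^ 3 - 3 * X 0 ^ 2) +
      C b * (2 * X 1 ^ 3 - 3 * X 1 ^ 2) -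
      C c * (X 0 ^ 2 * X 1 + X 0 * X 1 ^ 2 - X 0 * X 1) : MvPolynomial (Fin 2) K)) =
      C a * (C 2 * C 3 * X 0 ^ 2 - C 2 * C 3 * X 0) -
        C c * (C 2 * X 0 * X 1 + X 1 ^ 2 - X 1) := by
    rw [h2, h3]
    simp only [map_sub, map_add, Derivation.leibniz, Derivation.leibniz_pow, pderiv_C,
      pderiv_X_self, pderiv_X_of_ne h01.symm, smul_eq_mul, mul_zero, zero_mul, smul_zero,
      add_zero, zero_add, mul_one, smul_eq_mul, nsmul_eq_mul]
    push_cast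
    rw [h2, h3]
    ring
  have hd1 : pderiv (1 : Fin 2) ((C a * (2 * X 0 ^ 3 - 3 * X 0 ^ 2) +
      C b * (2 * X 1 ^ 3 - 3 * X 1 ^ 2) -
      C c * (X 0 ^ 2 * X 1 + X 0 * X 1 ^ 2 - X 0 * X 1) : MvPolynomial (Fin 2) K)) =
      C b * (C 2 * C 3 * X 1 ^ 2 - C 2 * C 3 * X 1) -
        C c * (X 0 ^ 2 + C 2 * X 0 * X 1 - X 0) := by
    rw [h2, h3]
    simp only [map_sub, map_add, Derivation.leibniz, Derivation.leibniz_pow, pderiv_C,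
      pderiv_X_self, pderiv_X_of_ne h01, smul_eq_mul, mul_zero, zero_mul, smul_zero,
      add_zero, zero_add, mul_one, nsmul_eq_mul]
    push_cast
    rw [h2, h3]
    ring
  intro p hp
  rw [hd0, hd1]
  simp only [Set.mem_insert_iff, Set.mem_singleton_iff] at hp
  rcases hp with rfl | rfl | rfl | rfl <;>
  refine ⟨?_, ?_⟩ <;>
  · simp only [eval_add, eval_sub, eval_mul, eval_pow, eval_C, eval_X,
      Matrix.cons_val_zero, Matrix.cons_val_one, Matrix.head_cons, ha, hb, hc]
    ring
end

section
/- Over a field K of characteristic 0, the polynomial f above with the nondegeneracy condition x₄y₄(x₄+y₄-1)(x₄+y₄)(x₄-1)(y₄-1) ≠ 0 is a nonzero polynomial of total degree 3. -/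
open MvPolynomial

/-- Under the nondegeneracy condition on `(x₄,y₄)`, the polynomial `f` is nonzero of total
degree exactly `3`. -/
theorem stmt5 (K : Type*) [Field K] [CharZero K] (x₄ y₄ : K)
    (hA : x₄ * y₄ * (x₄ + y₄ - 1) * (x₄ + y₄) * (x₄ - 1) * (y₄ - 1) ≠ 0)
    (f : MvPolynomial (Fin 2) K)
    (hf : f = C (y₄ ^ 2 * (y₄ - 1) * (2 * x₄ + y₄ - 1)) * (2 * X 0 ^ 3 - 3 * X 0 ^ 2) +
      C (x₄ ^ 2 * (x₄ - 1) * (x₄ + 2 * y₄ - 1)) * (2 * X 1 ^ 3 - 3 * X 1 ^ 2) -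
      C (6 * x₄ * y₄ * (x₄ - 1) * (y₄ - 1)) *
        (X 0 ^ 2 * X 1 + X 0 * X 1 ^ 2 - X 0 * X 1)) :
    f ≠ 0 ∧ f.totalDegree = 3 := by
  -- the key coefficient: the coefficient of X0^2 * X1 in f
  have hcoeff : coeff (Finsupp.single 0 2 + Finsupp.single 1 1) f
      = -(6 * x₄ * y₄ * (x₄ - 1) * (y₄ - 1)) := by
    rw [hf,
      show ((X 0 : MvPolynomial (Fin 2) K) ^ 2 * X 1 + X 0 * X 1 ^ 2 - X 0 * X 1)
        = X 0 ^ 2 * X 1 ^ 1 + X 0 ^ 1 * X 1 ^ 2 - X 0 ^ 1 * X 1 ^ 1 by ring,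
      show (2 : MvPolynomial (Fin 2) K) = C 2 from (map_ofNat C 2).symm,
      show (3 : MvPolynomial (Fin 2) K) = C 3 from (map_ofNat C 3).symm]
    simp only [X_pow_eq_monomial, monomial_mul, one_mul, coeff_sub, coeff_add, coeff_C_mul,
      coeff_monomial, mul_sub]
    norm_num [Finsupp.single_eq_single_iff, Finsupp.ext_iff, Finsupp.single_apply,
      Fin.forall_fin_two, Finsupp.add_apply]
  have hc : -(6 * x₄ * y₄ * (x₄ - 1) * (y₄ - 1)) ≠ 0 := by
    intro h
    apply hA
    have h6 : (6 : K) ≠ 0 := by norm_num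
    rcases mul_eq_zero.mp (neg_eq_zero.mp h) with h' | h'
    · rcases mul_eq_zero.mp h' with h'' | h''
      · rcases mul_eq_zero.mp h'' with h3 | h3
        · rcases mul_eq_zero.mp h3 with h4 | h4
          · exact absurd h4 h6
          · rw [h4]; ring
        · rw [h3]; ring
      · rw [h'']; ring
    · rw [h']; ring
  have hne : f ≠ 0 := by
    intro h
    rw [h, coeff_zero] at hcoeff
    exact hc hcoeff.symm
  have hmem : (Finsupp.single 0 2 + Finsupp.single 1 1 : Fin 2 →₀ ℕ) ∈ f.support := by
    rw [mem_support_iff, hcoeff]; exact hc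
  have hge : 3 ≤ f.totalDegree := by
    have := le_totalDegree hmem
    simpa [Finsupp.sum_add_index, Finsupp.sum_single_index] using this
  have t2 : (2 : MvPolynomial (Fin 2) K).totalDegree = 0 := by
    rw [← map_ofNat (C : K →+* MvPolynomial (Fin 2) K) 2]; exact totalDegree_C _
  have t3 : (3 : MvPolynomial (Fin 2) K).totalDegree = 0 := by
    rw [← map_ofNat (C : K →+* MvPolynomial (Fin 2) K) 3]; exact totalDegree_C _
  have hle : f.totalDegree ≤ 3 := by
    rw [hf]
    refine (totalDegree_sub _ _).trans (max_le ((totalDegree_add _ _).trans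
      (max_le ?_ ?_)) ?_)
    · refine (totalDegree_mul _ _).trans ?_
      rw [totalDegree_C, zero_add]
      refine (totalDegree_sub _ _).trans (max_le ?_ ?_)
      · exact (totalDegree_mul _ _).trans (by simp [t2, totalDegree_X_pow])
      · exact (totalDegree_mul _ _).trans (by simp [t3, totalDegree_X_pow])
    · refine (totalDegree_mul _ _).trans ?_
      rw [totalDegree_C, zero_add]
      refine (totalDegree_sub _ _).trans (max_le ?_ ?_)
      · exact (totalDegree_mul _ _).trans (by simp [t2, totalDegree_X_pow])
      · exact (totalDegree_mul _ _).trans (by simp [t3, totalDegree_X_pow])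
    · refine (totalDegree_mul _ _).trans ?_
      rw [totalDegree_C, zero_add]
      refine (totalDegree_sub _ _).trans (max_le ((totalDegree_add _ _).trans
        (max_le ?_ ?_)) ?_)
      · exact (totalDegree_mul _ _).trans (by simp [totalDegree_X_pow, totalDegree_X])
      · exact (totalDegree_mul _ _).trans (by simp [totalDegree_X_pow, totalDegree_X])
      · exact (totalDegree_mul _ _).trans (by simp [totalDegree_X])
  exact ⟨hne, le_antisymm hle hge⟩
end

section
/- Over a field K of characteristic 0, every polynomial f ∈ K[x,y] of degree ≤ 3 with zero constant term whose critical point set contains the four collinear points (0,0), (1,0), (x₃,0), (x₄,0) with 0, 1, x₃, x₄ pairwise distinct, is of the form f(x,y) = y²(a₃x + a₄y + a₇) for some a₃, a₄, a₇ ∈ K. -/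
open MvPolynomial

open Finsupp in
lemma fin2_eq (m : Fin 2 →₀ ℕ) : m = single 0 (m 0) + single 1 (m 1) := by
  ext i; fin_cases i <;> simp

open Finsupp in
lemma sing_eq_iff (i j i' j' : ℕ) :
    single (0 : Fin 2) i + single 1 j = single 0 i' + single 1 j' ↔ i = i' ∧ j = j' := by
  constructor
  · intro h
    constructor
    · have := DFunLike.congr_fun h 0; simpa using this
    · have := DFunLike.congr_fun h 1; simpa using this
  · rintro ⟨rfl, rfl⟩; rfl

lemma supsum (m : Fin 2 →₀ ℕ) : (∑ i ∈ m.support, m i) = m 0 + m 1 := by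
  rw [show m 0 + m 1 = ∑ i : Fin 2, m i from (Fin.sum_univ_two _).symm]
  exact Finset.sum_subset (Finset.subset_univ _)
    (fun i _ hi => Finsupp.notMem_support_iff.mp hi)

open Finsupp in
lemma mono_eq {R : Type*} [CommSemiring R] (i j : ℕ) (a : R) :
    monomial (single (0 : Fin 2) i + single 1 j) a = C a * X 0 ^ i * X 1 ^ j := by
  rw [X_pow_eq_monomial, X_pow_eq_monomial, C_apply, monomial_mul, monomial_mul]
  simp

open Finsupp in
lemma cubic_decomp {R : Type*} [CommSemiring R] (f : MvPolynomial (Fin 2) R)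
    (hdeg : f.totalDegree ≤ 3) :
    f = monomial (single 0 3 + single 1 0) (coeff (single 0 3 + single 1 0) f)
      + monomial (single 0 2 + single 1 1) (coeff (single 0 2 + single 1 1) f)
      + monomial (single 0 1 + single 1 2) (coeff (single 0 1 + single 1 2) f)
      + monomial (single 0 0 + single 1 3) (coeff (single 0 0 + single 1 3) f)
      + monomial (single 0 2 + single 1 0) (coeff (single 0 2 + single 1 0) f)
      + monomial (single 0 1 + single 1 1) (coeff (single 0 1 + single 1 1) f)
      + monomial (single 0 0 + single 1 2) (coeff (single 0 0 + single 1 2) f)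
      + monomial (single 0 1 + single 1 0) (coeff (single 0 1 + single 1 0) f)
      + monomial (single 0 0 + single 1 1) (coeff (single 0 0 + single 1 1) f)
      + monomial (single 0 0 + single 1 0) (coeff (single 0 0 + single 1 0) f) := by
  ext m
  by_cases h : m 0 + m 1 ≤ 3
  · have h0 : m 0 ≤ 3 := by omega
    have h1 : m 1 ≤ 3 := by omega
    rw [fin2_eq m]
    set i := m 0 with hi
    set j := m 1 with hj
    clear_value i j
    clear hi hj
    interval_cases i <;> interval_cases j <;>
      first
        | omega
        | (simp only [coeff_add, coeff_monomial, sing_eq_iff]; norm_num)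
  · have hz : coeff m f = 0 := coeff_eq_zero_of_totalDegree_lt (by rw [supsum]; omega)
    have hne : ∀ i j : ℕ, i + j ≤ 3 → ¬(single (0 : Fin 2) i + single 1 j = m) := by
      intro i j hij he
      have e0 := DFunLike.congr_fun he 0
      have e1 := DFunLike.congr_fun he 1
      simp [Finsupp.single_apply] at e0 e1
      omega
    rw [hz]
    symm
    simp only [coeff_add, coeff_monomial]
    rw [if_neg (hne 3 0 (by norm_num)), if_neg (hne 2 1 (by norm_num)),
      if_neg (hne 1 2 (by norm_num)), if_neg (hne 0 3 (by norm_num)),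
      if_neg (hne 2 0 (by norm_num)), if_neg (hne 1 1 (by norm_num)),
      if_neg (hne 0 2 (by norm_num)), if_neg (hne 1 0 (by norm_num)),
      if_neg (hne 0 1 (by norm_num)), if_neg (hne 0 0 (by norm_num))]
    simp

open Finsupp in
/-- Every cubic with zero constant term whose critical points include the four distinct
collinear points `(0,0),(1,0),(x₃,0),(x₄,0)` has the form `y²(a₃x + a₄y + a₇)`. -/
theorem stmt8 (K : Type*) [Field K] [CharZero K] (x₃ x₄ : K)
    (h₃0 : x₃ ≠ 0) (h₃1 : x₃ ≠ 1) (h₄0 : x₄ ≠ 0) (h₄1 : x₄ ≠ 1) (h₃₄ : x₃ ≠ x₄)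
    (f : MvPolynomial (Fin 2) K)
    (hdeg : f.totalDegree ≤ 3) (hconst : eval (0 : Fin 2 → K) f = 0)
    (hcrit : ∀ p ∈ ({![0, 0], ![1, 0], ![x₃, 0], ![x₄, 0]} : Set (Fin 2 → K)),
      eval p (pderiv 0 f) = 0 ∧ eval p (pderiv 1 f) = 0) :
    ∃ a₃ a₄ a₇ : K, f = X 1 ^ 2 * (C a₃ * X 0 + C a₄ * X 1 + C a₇) := by
  have hf0 := cubic_decomp f hdeg
  set a₁ := coeff (single 0 3 + single 1 0) f with ha₁d
  set a₂ := coeff (single 0 2 + single 1 1) f with ha₂d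
  set a₃ := coeff (single 0 1 + single 1 2) f with ha₃d
  set a₄ := coeff (single 0 0 + single 1 3) f with ha₄d
  set a₅ := coeff (single 0 2 + single 1 0) f with ha₅d
  set a₆ := coeff (single 0 1 + single 1 1) f with ha₆d
  set a₇ := coeff (single 0 0 + single 1 2) f with ha₇d
  set a₈ := coeff (single 0 1 + single 1 0) f with ha₈d
  set a₉ := coeff (single 0 0 + single 1 1) f with ha₉d
  set a₀ := coeff (single 0 0 + single 1 0) f with ha₀d
  rw [mono_eq, mono_eq, mono_eq, mono_eq, mono_eq, mono_eq, mono_eq, mono_eq,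
    mono_eq, mono_eq] at hf0
  have hf : f = C a₁ * X 0 ^ 3 + C a₂ * X 0 ^ 2 * X 1 + C a₃ * X 0 * X 1 ^ 2 + C a₄ * X 1 ^ 3
      + C a₅ * X 0 ^ 2 + C a₆ * X 0 * X 1 + C a₇ * X 1 ^ 2 + C a₈ * X 0 + C a₉ * X 1 + C a₀ := by
    rw [hf0]; ring
  clear hf0
  obtain ⟨e0x, e0y⟩ := hcrit ![0, 0] (by left; rfl)
  obtain ⟨e1x, e1y⟩ := hcrit ![1, 0] (by right; left; rfl)
  obtain ⟨e3x, e3y⟩ := hcrit ![x₃, 0] (by right; right; left; rfl)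
  rw [hf] at e0x e0y e1x e1y e3x e3y hconst
  simp [pderiv_mul, pderiv_X, pderiv_pow, pderiv_C] at e0x e0y e1x e1y e3x e3y hconst
  have h3 : (3 : K) ≠ 0 := by norm_num
  have h31 : x₃ - 1 ≠ 0 := sub_ne_zero.mpr h₃1
  have k1 : a₁ * (3 * x₃ * (x₃ - 1)) = 0 := by linear_combination e3x - x₃ * e1x + (x₃ - 1) * e0x
  have ha1 : a₁ = 0 := (mul_eq_zero.mp k1).resolve_right (mul_ne_zero (mul_ne_zero h3 h₃0) h31)
  have ha5 : a₅ = 0 := by linear_combination (1/2 : K) * e1x - (3/2 : K) * ha1 - (1/2 : K) * e0x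
  have k2 : a₂ * (x₃ * (x₃ - 1)) = 0 := by linear_combination e3y - x₃ * e1y + (x₃ - 1) * e0y
  have ha2 : a₂ = 0 := (mul_eq_zero.mp k2).resolve_right (mul_ne_zero h₃0 h31)
  have ha6 : a₆ = 0 := by linear_combination e1y - ha2 - e0y
  refine ⟨a₃, a₄, a₇, ?_⟩
  rw [hf, ha1, ha2, ha5, ha6, e0x, e0y, hconst]
  simp only [map_zero]
  ring
end
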